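/- (Aufbau principle) Let A, B be real symmetric M×M matrices with A positive semidefinite, and let P⋆ be a global minimizer of J over Gr(m,ℝ^M). Then there exist an orthonormal family (x₁,…,x_M) of vectors in ℝ^M and real numbers λ₁ ≤ λ₂ ≤ ⋯ ≤ λ_M such that P⋆ = Σ_{k=1}^{m} x_k x_kᵀ and G(P⋆) x_k = λ_k x_k for every 1 ≤ k ≤ M. In particular P⋆ and G(P⋆) commute and P⋆ projects onto a span of eigenvectors of G(P⋆) associated with its m smallest eigenvalues. -/

import Mathlib

open Matrix Filter Topology

noncomputable section

/-- The Grassmann manifold `Gr(m, ℝ^M)`. -/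
def Gr (M m : ℕ) (P : Matrix (Fin M) (Fin M) ℝ) : Prop :=
  P.IsSymm ∧ P * P = P ∧ P.trace = (m : ℝ)

/-- The cost function `J(P) = Tr(BP) - (1/2) Tr(APAP)`. -/
def Jfun {M : ℕ} (A B P : Matrix (Fin M) (Fin M) ℝ) : ℝ :=
  (B * P).trace - (1 / 2) * (A * P * A * P).trace

/-- The gradient `G(P) = B - APA`. -/
def Gmap {M : ℕ} (A B P : Matrix (Fin M) (Fin M) ℝ) : Matrix (Fin M) (Fin M) ℝ :=
  B - A * P * A

/-!
Because `A ⪰ 0`, the term `-½ Tr(APAP)` makes `J` concave: expanding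
`J(P) = J(P⋆) + Tr(G(P⋆)(P - P⋆)) - ½ Tr(A(P - P⋆)A(P - P⋆))` shows that `P⋆` also minimizes the
linear functional `P ↦ Tr(G P)`, `G = G(P⋆)`, over the Grassmannian. Exchanging a vector
`u ∈ ran P⋆` for `u + t v` with `v ∈ ker P⋆` cannot lower `Tr(G P)`: to first order in `t` this
forces `⟨u, G v⟩ = 0`, whence `P⋆` commutes with `G`, and at `t = 1` it shows that the Rayleigh
quotients of `G` on `ran P⋆` never exceed those on `ker P⋆`. A joint orthonormal eigenbasis of `G` and `P⋆`, sorted by eigenvalue with ties broken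
in favour of `ran P⋆`, is the required family.
-/

variable {n : Type*} [Fintype n]

lemma dotProduct_self_pos {v : n → ℝ} (hv : v ≠ 0) : 0 < v ⬝ᵥ v := by
  simpa using dotProduct_star_self_pos_iff.mpr hv

lemma dotProduct_mulVec_comm_of_isSymm {G : Matrix n n ℝ} (hG : G.IsSymm) (x y : n → ℝ) :
    x ⬝ᵥ G *ᵥ y = y ⬝ᵥ G *ᵥ x := by
  rw [dotProduct_mulVec, ← mulVec_transpose, hG.eq, dotProduct_comm]

lemma IsStarProjection.isSymm {P : Matrix n n ℝ} (hP : IsStarProjection P) : P.IsSymm :=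
  isHermitian_iff_isSymm.mp hP.isSelfAdjoint

lemma Matrix.PosSemidef.trace_mul_nonneg {A B : Matrix n n ℝ} (hA : A.PosSemidef)
    (hB : B.PosSemidef) : 0 ≤ (A * B).trace := by
  classical
  open scoped MatrixOrder in
  obtain ⟨C, rfl⟩ := CStarAlgebra.nonneg_iff_eq_star_mul_self.mp hA.nonneg
  rw [star_eq_conjTranspose, Matrix.mul_assoc, trace_mul_comm]
  exact (hB.mul_mul_conjTranspose_same C).trace_nonneg

lemma sum_vecMulVec_eq_one [DecidableEq n] {y : n → n → ℝ}
    (hy : ∀ i j, y i ⬝ᵥ y j = if i = j then 1 else 0) : ∑ i, vecMulVec (y i) (y i) = 1 := by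
  have h : of y * (of y)ᵀ = 1 := by
    ext i j
    simpa [mul_apply, dotProduct, one_apply] using hy i j
  rw [mul_eq_one_comm, ← ext_iff] at h
  ext a b
  simpa [mul_apply, vecMulVec_apply, Matrix.sum_apply] using h a b

lemma eq_sum_vecMulVec_of_orthonormal [DecidableEq n] {P : Matrix n n ℝ} {y : n → n → ℝ}
    (hy : ∀ i j, y i ⬝ᵥ y j = if i = j then 1 else 0)
    (hPy : ∀ i, P *ᵥ y i = y i ∨ P *ᵥ y i = 0) :
    P = ∑ i with P *ᵥ y i = y i, vecMulVec (y i) (y i) := by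
  calc P = P * ∑ i, vecMulVec (y i) (y i) := by rw [sum_vecMulVec_eq_one hy, Matrix.mul_one]
    _ = ∑ i, vecMulVec (P *ᵥ y i) (y i) := by simp only [Finset.mul_sum, mul_vecMulVec]
    _ = _ := by
      rw [Finset.sum_filter]
      refine Finset.sum_congr rfl fun i _ => ?_
      split_ifs with h
      · rw [h]
      · rw [(hPy i).resolve_left h, zero_vecMulVec]

lemma trace_sum_vecMulVec_of_orthonormal [DecidableEq n] {y : n → n → ℝ}
    (hy : ∀ i j, y i ⬝ᵥ y j = if i = j then 1 else 0) (S : Finset n) :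
    (∑ i ∈ S, vecMulVec (y i) (y i)).trace = S.card := by
  simp [trace_sum, hy]

lemma mem_spectrum_of_mulVec_eq_smul [DecidableEq n] {G : Matrix n n ℝ} {y : n → ℝ} {t : ℝ}
    (hy : y ≠ 0) (h : G *ᵥ y = t • y) : t ∈ spectrum ℝ G := by
  rw [← spectrum_toLin']
  exact (Module.End.hasEigenvalue_of_hasEigenvector
    ⟨Module.End.mem_eigenspace_iff.mpr (by rwa [toLin'_apply]), hy⟩).mem_spectrum

lemma exists_orthonormal_eigenvectors_of_commute [DecidableEq n] {G P : Matrix n n ℝ}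
    (hG : G.IsSymm) (hP : IsStarProjection P) (hPG : Commute P G) :
    ∃ (y : n → n → ℝ) (g : n → ℝ), (∀ i j, y i ⬝ᵥ y j = if i = j then 1 else 0) ∧
      (∀ i, G *ᵥ y i = g i • y i) ∧ ∀ i, P *ᵥ y i = y i ∨ P *ᵥ y i = 0 := by
  -- With `c` not a difference of two eigenvalues of `G`, no eigenvector of `G - c P` can have
  -- nonzero components in both `ran P` and `ker P`.
  obtain ⟨c, hc⟩ :=
    ((finite_real_spectrum (A := G)).sub (finite_real_spectrum (A := G))).exists_notMem
  have hH : (G - c • P).IsHermitian := isHermitian_iff_isSymm.mpr (hG.sub (hP.isSymm.smul c))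
  set y : n → n → ℝ := fun i => (hH.eigenvectorBasis i).ofLp
  have hy : ∀ i j, y i ⬝ᵥ y j = if i = j then 1 else 0 := fun i j => by
    simpa [EuclideanSpace.inner_eq_star_dotProduct, dotProduct_comm, y] using
      orthonormal_iff_ite.mp hH.eigenvectorBasis.orthonormal i j
  have hPP : P * P = P := hP.isIdempotentElem.eq
  have hsplit : ∀ i, (∃ g : ℝ, G *ᵥ y i = g • y i) ∧ (P *ᵥ y i = y i ∨ P *ᵥ y i = 0) := by
    intro i
    set μ := hH.eigenvalues i
    have hHy : (G - c • P) *ᵥ y i = μ • y i := hH.mulVec_eigenvectorBasis i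
    have hGy : G *ᵥ y i = μ • y i + c • P *ᵥ y i := by
      rw [← hHy, sub_mulVec, smul_mulVec, sub_add_cancel]
    have hGPy : G *ᵥ (P *ᵥ y i) = (μ + c) • P *ᵥ y i := by
      rw [mulVec_mulVec, ← hPG.eq, ← mulVec_mulVec, hGy, mulVec_add, mulVec_smul, mulVec_smul,
        mulVec_mulVec, hPP, add_smul]
    have hGQy : G *ᵥ (y i - P *ᵥ y i) = μ • (y i - P *ᵥ y i) := by
      rw [mulVec_sub, hGy, hGPy, add_smul, smul_sub]
      abel
    by_cases h0 : P *ᵥ y i = 0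
    · exact ⟨⟨μ, by rw [hGy, h0, smul_zero, add_zero]⟩, Or.inr h0⟩
    by_cases h1 : y i - P *ᵥ y i = 0
    · rw [sub_eq_zero] at h1
      exact ⟨⟨μ + c, h1 ▸ hGPy⟩, Or.inl h1.symm⟩
    have hmem := Set.sub_mem_sub (mem_spectrum_of_mulVec_eq_smul h0 hGPy)
      (mem_spectrum_of_mulVec_eq_smul h1 hGQy)
    rw [add_sub_cancel_left] at hmem
    exact absurd hmem hc
  choose g hg using fun i => (hsplit i).1
  exact ⟨y, g, hy, hg, fun i => (hsplit i).2⟩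

lemma eq_zero_of_forall_mul_self_add_mul_nonneg {a b : ℝ} (h : ∀ t : ℝ, 0 ≤ a * (t * t) + b * t) :
    b = 0 := by
  have hdisc := discrim_le_zero (c := 0) fun t => (add_zero (a * (t * t) + b * t)).symm ▸ h t
  rw [discrim, mul_zero, sub_zero] at hdisc
  exact pow_eq_zero_iff two_ne_zero |>.mp (le_antisymm hdisc (sq_nonneg b))

lemma Fin.mem_iff_lt_of_forall_lt {M : ℕ} {T : Finset (Fin M)}
    (hT : ∀ a ∈ T, ∀ b ∉ T, a < b) (k : Fin M) : k ∈ T ↔ (k : ℕ) < T.card := by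
  constructor
  · intro hk
    have : Finset.Iic k ⊆ T := fun b hb => by
      by_contra hbT
      exact (Finset.mem_Iic.mp hb).not_gt (hT k hk b hbT)
    simpa [Fin.card_Iic] using Finset.card_le_card this
  · intro hk
    by_contra hkT
    have : T ⊆ Finset.Iio k := fun a ha => Finset.mem_Iio.mpr (hT a ha k hkT)
    have := Finset.card_le_card this
    rw [Fin.card_Iio] at this
    omega

lemma Fin.exists_perm_monotone_and_mem_iff {M : ℕ} {α : Type*} [LinearOrder α] (g : Fin M → α)
    (S : Finset (Fin M)) (hg : ∀ i ∈ S, ∀ j ∉ S, g i ≤ g j) :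
    ∃ σ : Equiv.Perm (Fin M), Monotone (g ∘ σ) ∧ ∀ k, σ k ∈ S ↔ (k : ℕ) < S.card := by
  set key : Fin M → α ×ₗ Bool := fun i => toLex (g i, decide (i ∉ S))
  set σ := Tuple.sort key
  have hmono : Monotone (key ∘ σ) := Tuple.monotone_sort key
  set T : Finset (Fin M) := {k | σ k ∈ S}
  have hTcard : T.card = S.card := Finset.card_equiv σ (by simp [T])
  have hT : ∀ a ∈ T, ∀ b ∉ T, a < b := by
    intro a ha b hb
    simp only [T, Finset.mem_filter, Finset.mem_univ, true_and] at ha hb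
    refine lt_of_not_ge fun hba => ?_
    have := hmono hba
    simp only [Function.comp_apply, key, Prod.Lex.toLex_le_toLex, ha, hb] at this
    rcases this with h | ⟨-, h⟩
    · exact (hg _ ha _ hb).not_gt h
    · exact absurd h (by decide)
  refine ⟨σ, fun a b hab => Prod.Lex.monotone_fst _ _ (hmono hab), fun k => ?_⟩
  rw [← hTcard, ← Fin.mem_iff_lt_of_forall_lt hT]
  simp [T]

/-- The orthogonal projection onto `span {x}`; it is `0` for `x = 0`. -/
def rankOneProj (x : n → ℝ) : Matrix n n ℝ := (x ⬝ᵥ x)⁻¹ • vecMulVec x x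

lemma rankOneProj_mulVec (x y : n → ℝ) : rankOneProj x *ᵥ y = ((x ⬝ᵥ y) / (x ⬝ᵥ x)) • x := by
  rw [rankOneProj, smul_mulVec, vecMulVec_mulVec, op_smul_eq_smul, smul_smul, dotProduct_comm,
    inv_mul_eq_div]

lemma isStarProjection_rankOneProj {x : n → ℝ} (hx : x ≠ 0) : IsStarProjection (rankOneProj x) := by
  have hxx : x ⬝ᵥ x ≠ 0 := by simpa using hx
  rw [isStarProjection_iff', star_eq_conjTranspose, conjTranspose_eq_transpose_of_trivial]
  refine ⟨?_, by simp [rankOneProj, transpose_vecMulVec]⟩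
  rw [rankOneProj, smul_mul_smul, vecMulVec_mul_vecMulVec, vecMulVec_smul, smul_smul,
    mul_assoc, inv_mul_cancel₀ hxx, mul_one]

lemma trace_rankOneProj {x : n → ℝ} (hx : x ≠ 0) : (rankOneProj x).trace = 1 := by
  have hxx : x ⬝ᵥ x ≠ 0 := by simpa using hx
  simp [rankOneProj, hxx]

lemma trace_mul_rankOneProj (G : Matrix n n ℝ) (x : n → ℝ) :
    (G * rankOneProj x).trace = (x ⬝ᵥ G *ᵥ x) / (x ⬝ᵥ x) := by
  rw [rankOneProj, mul_smul_comm, trace_smul, mul_vecMulVec, trace_vecMulVec,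
    dotProduct_comm (G *ᵥ x), smul_eq_mul, inv_mul_eq_div]

lemma IsStarProjection.sub_rankOneProj {P : Matrix n n ℝ} (hP : IsStarProjection P) {u : n → ℝ}
    (hu0 : u ≠ 0) (hu : P *ᵥ u = u) : IsStarProjection (P - rankOneProj u) :=
  (isStarProjection_rankOneProj hu0).sub_of_mul_eq_left hP <| by
    rw [rankOneProj, smul_mul_assoc, vecMulVec_mul, ← mulVec_transpose, hP.isSymm.eq, hu]

lemma IsStarProjection.add_rankOneProj {P : Matrix n n ℝ} (hP : IsStarProjection P) {w : n → ℝ}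
    (hw0 : w ≠ 0) (hw : P *ᵥ w = 0) : IsStarProjection (P + rankOneProj w) :=
  hP.add (isStarProjection_rankOneProj hw0) <| by
    rw [rankOneProj, mul_smul_comm, mul_vecMulVec, hw, zero_vecMulVec, smul_zero]

def IsMinTraceProjection (G P : Matrix n n ℝ) : Prop :=
  IsStarProjection P ∧
    ∀ Q : Matrix n n ℝ, IsStarProjection Q → Q.trace = P.trace → (G * P).trace ≤ (G * Q).trace

namespace IsMinTraceProjection

variable {G P : Matrix n n ℝ}

lemma rayleigh_le (h : IsMinTraceProjection G P) {u w : n → ℝ} (hu0 : u ≠ 0)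
    (hu : P *ᵥ u = u) (hw0 : w ≠ 0) (hw : (P - rankOneProj u) *ᵥ w = 0) :
    (u ⬝ᵥ G *ᵥ u) / (u ⬝ᵥ u) ≤ (w ⬝ᵥ G *ᵥ w) / (w ⬝ᵥ w) := by
  have hQ := h.2 _ ((h.1.sub_rankOneProj hu0 hu).add_rankOneProj hw0 hw) <| by
    rw [trace_add, trace_sub, trace_rankOneProj hu0, trace_rankOneProj hw0, sub_add_cancel]
  rw [mul_add, mul_sub, trace_add, trace_sub, trace_mul_rankOneProj,
    trace_mul_rankOneProj] at hQ
  linarith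

/-- The value of `Tr(G Q) - Tr(G P)`, times `‖u‖² ‖u + t v‖²`, at the projection `Q` obtained from
`P` by exchanging `u` for `u + t v`. -/
lemma exchange_nonneg (h : IsMinTraceProjection G P) (hG : G.IsSymm) {u v : n → ℝ}
    (hu0 : u ≠ 0) (hu : P *ᵥ u = u) (hv : P *ᵥ v = 0) (t : ℝ) :
    0 ≤ ((u ⬝ᵥ u) * (v ⬝ᵥ G *ᵥ v) - (v ⬝ᵥ v) * (u ⬝ᵥ G *ᵥ u)) * (t * t)
      + 2 * (u ⬝ᵥ u) * (u ⬝ᵥ G *ᵥ v) * t := by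
  have huv : u ⬝ᵥ v = 0 := by
    rw [← hu, dotProduct_comm, dotProduct_mulVec, ← mulVec_transpose, h.1.isSymm.eq, hv,
      zero_dotProduct]
  have huu := dotProduct_self_pos hu0
  have hww : (u + t • v) ⬝ᵥ (u + t • v) = u ⬝ᵥ u + t * t * (v ⬝ᵥ v) := by
    simp only [dotProduct_add, add_dotProduct, dotProduct_smul, smul_dotProduct, smul_eq_mul,
      dotProduct_comm v u, huv]
    ring
  have hwGw : (u + t • v) ⬝ᵥ G *ᵥ (u + t • v)
      = u ⬝ᵥ G *ᵥ u + 2 * t * (u ⬝ᵥ G *ᵥ v) + t * t * (v ⬝ᵥ G *ᵥ v) := by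
    simp only [mulVec_add, mulVec_smul, dotProduct_add, add_dotProduct, dotProduct_smul,
      smul_dotProduct, smul_eq_mul, dotProduct_mulVec_comm_of_isSymm hG v u]
    ring
  have hvv : 0 ≤ v ⬝ᵥ v := by simpa using dotProduct_star_self_nonneg v
  have hww_pos : 0 < u ⬝ᵥ u + t * t * (v ⬝ᵥ v) :=
    add_pos_of_pos_of_nonneg huu (mul_nonneg (mul_self_nonneg t) hvv)
  have hw0 : u + t • v ≠ 0 := by
    rw [Ne, ← dotProduct_self_eq_zero, hww]
    exact hww_pos.ne'
  have hw : (P - rankOneProj u) *ᵥ (u + t • v) = 0 := by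
    rw [sub_mulVec, rankOneProj_mulVec, mulVec_add, mulVec_smul, hu, hv, dotProduct_add,
      dotProduct_smul, huv, smul_zero, add_zero, smul_eq_mul, mul_zero, add_zero,
      div_self huu.ne', one_smul, sub_self]
  have hR := h.rayleigh_le hu0 hu hw0 hw
  rw [div_le_div_iff₀ huu (hww ▸ hww_pos), hww, hwGw] at hR
  linarith

lemma dotProduct_mulVec_eq_zero_and_le (h : IsMinTraceProjection G P) (hG : G.IsSymm)
    {u v : n → ℝ} (hu : P *ᵥ u = u) (hv : P *ᵥ v = 0) :
    u ⬝ᵥ G *ᵥ v = 0 ∧ (v ⬝ᵥ v) * (u ⬝ᵥ G *ᵥ u) ≤ (u ⬝ᵥ u) * (v ⬝ᵥ G *ᵥ v) := by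
  rcases eq_or_ne u 0 with rfl | hu0
  · simp
  have hexch := h.exchange_nonneg hG hu0 hu hv
  have hβ : u ⬝ᵥ G *ᵥ v = 0 := by
    simpa [(dotProduct_self_pos hu0).ne'] using eq_zero_of_forall_mul_self_add_mul_nonneg hexch
  refine ⟨hβ, ?_⟩
  have := hexch 1
  rw [hβ] at this
  linarith

lemma commute [DecidableEq n] (h : IsMinTraceProjection G P) (hG : G.IsSymm) : Commute P G := by
  have hP := h.1.isSymm
  have hPGQ : P * G * (1 - P) = 0 := by
    refine ext_iff_mulVec.mpr fun b => ?_
    rw [zero_mulVec]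
    refine dotProduct_eq_zero _ fun a => ?_
    rw [← mulVec_mulVec, ← mulVec_mulVec, dotProduct_comm, dotProduct_mulVec,
      ← mulVec_transpose, hP.eq]
    refine (h.dotProduct_mulVec_eq_zero_and_le hG ?_ ?_).1
    · rw [mulVec_mulVec, h.1.isIdempotentElem.eq]
    · rw [mulVec_mulVec, h.1.mul_one_sub_self, zero_mulVec]
  have hQGP : (1 - P) * G * P = 0 := by
    simpa [transpose_mul, hP.eq, hG.eq, Matrix.mul_assoc] using congrArg transpose hPGQ
  have h1 : P * G = P * G * P := by
    rwa [Matrix.mul_sub, Matrix.mul_one, sub_eq_zero] at hPGQ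
  have h2 : G * P = P * G * P := by
    rwa [Matrix.sub_mul, Matrix.one_mul, Matrix.sub_mul, sub_eq_zero] at hQGP
  exact h1.trans h2.symm

end IsMinTraceProjection

theorem IsMinTraceProjection.exists_orthonormal_eigenvectors {M m : ℕ}
    {G P : Matrix (Fin M) (Fin M) ℝ} (h : IsMinTraceProjection G P) (hG : G.IsSymm)
    (hm : P.trace = m) :
    ∃ x : Fin M → Fin M → ℝ, ∃ lam : Fin M → ℝ,
      (∀ k l, x k ⬝ᵥ x l = if k = l then 1 else 0) ∧ Monotone lam ∧
      P = ∑ k ∈ Finset.univ.filter (fun k : Fin M => (k : ℕ) < m), vecMulVec (x k) (x k) ∧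
      ∀ k, G *ᵥ x k = lam k • x k := by
  obtain ⟨y, g, hy, hGy, hPy⟩ := exists_orthonormal_eigenvectors_of_commute hG h.1 (h.commute hG)
  set S : Finset (Fin M) := {i | P *ᵥ y i = y i}
  have hPS : P = ∑ i ∈ S, vecMulVec (y i) (y i) := eq_sum_vecMulVec_of_orthonormal hy hPy
  have hS : S.card = m := by
    exact_mod_cast (trace_sum_vecMulVec_of_orthonormal hy S).symm.trans (hPS ▸ hm)
  have hg : ∀ i ∈ S, ∀ j ∉ S, g i ≤ g j := by
    intro i hi j hj
    simp only [S, Finset.mem_filter, Finset.mem_univ, true_and] at hi hj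
    have := (h.dotProduct_mulVec_eq_zero_and_le hG hi ((hPy j).resolve_left hj)).2
    simpa [hGy, hy] using this
  obtain ⟨σ, hσg, hσS⟩ := Fin.exists_perm_monotone_and_mem_iff g S hg
  refine ⟨y ∘ σ, g ∘ σ, fun k l => by
    simp only [Function.comp_apply, hy, σ.injective.eq_iff], hσg, ?_, fun k => hGy (σ k)⟩
  rw [hPS]
  exact (Finset.sum_equiv σ (by simp [← hS, hσS]) fun _ _ => rfl).symm

lemma gr_iff_isStarProjection {M m : ℕ} {P : Matrix (Fin M) (Fin M) ℝ} :
    Gr M m P ↔ IsStarProjection P ∧ P.trace = m := by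
  rw [Gr, isStarProjection_iff', star_eq_conjTranspose, conjTranspose_eq_transpose_of_trivial]
  tauto

lemma Jfun_add {M : ℕ} (A B P Q : Matrix (Fin M) (Fin M) ℝ) :
    Jfun A B (P + Q) =
      Jfun A B P + (Gmap A B P * Q).trace - 1 / 2 * (A * Q * A * Q).trace := by
  have hcyc : (A * Q * A * P).trace = (A * P * A * Q).trace := by
    rw [Matrix.mul_assoc, trace_mul_comm, ← Matrix.mul_assoc]
  simp only [Jfun, Gmap, mul_add, add_mul, Matrix.sub_mul, trace_add, trace_sub, hcyc]
  ring

lemma Gmap_isSymm {M : ℕ} {A B P : Matrix (Fin M) (Fin M) ℝ} (hA : A.PosSemidef)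
    (hB : B.IsSymm) (hP : P.IsSymm) : (Gmap A B P).IsSymm := by
  have hA' : A.IsSymm := isHermitian_iff_isSymm.mp hA.isHermitian
  simp [Gmap, Matrix.IsSymm, transpose_mul, hA'.eq, hB.eq, hP.eq, Matrix.mul_assoc]

lemma isMinTraceProjection_Gmap {M m : ℕ} {A B P : Matrix (Fin M) (Fin M) ℝ}
    (hA : A.PosSemidef) (hP : Gr M m P) (hmin : ∀ Q, Gr M m Q → Jfun A B P ≤ Jfun A B Q) :
    IsMinTraceProjection (Gmap A B P) P := by
  refine ⟨(gr_iff_isStarProjection.mp hP).1, fun Q hQ hQtr => ?_⟩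
  have hJ := hmin Q (gr_iff_isStarProjection.mpr ⟨hQ, hQtr.trans hP.2.2⟩)
  have hD : (Q - P)ᴴ = Q - P := by
    rw [conjTranspose_eq_transpose_of_trivial, transpose_sub, hQ.isSymm.eq, hP.1.eq]
  have hcurv : 0 ≤ (A * (Q - P) * A * (Q - P)).trace := by
    have := hA.trace_mul_nonneg (hA.conjTranspose_mul_mul_same (Q - P))
    rwa [hD, ← Matrix.mul_assoc, ← Matrix.mul_assoc] at this
  rw [← add_sub_cancel P Q, Jfun_add, Matrix.mul_sub, trace_sub] at hJ
  linarith

theorem stmt_2_general {M m : ℕ}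
    (A B : Matrix (Fin M) (Fin M) ℝ) (hApsd : A.PosSemidef)
    (hB : B.IsSymm) (Pstar : Matrix (Fin M) (Fin M) ℝ) (hP : Gr M m Pstar)
    (hmin : ∀ P : Matrix (Fin M) (Fin M) ℝ, Gr M m P → Jfun A B Pstar ≤ Jfun A B P) :
    ∃ x : Fin M → (Fin M → ℝ), ∃ lam : Fin M → ℝ,
      (∀ k l : Fin M, x k ⬝ᵥ x l = if k = l then (1 : ℝ) else 0) ∧
      Monotone lam ∧
      Pstar = ∑ k ∈ Finset.univ.filter (fun k : Fin M => (k : ℕ) < m),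
        vecMulVec (x k) (x k) ∧
      ∀ k : Fin M, (Gmap A B Pstar).mulVec (x k) = lam k • x k :=
  (isMinTraceProjection_Gmap hApsd hP hmin).exists_orthonormal_eigenvectors
    (Gmap_isSymm hApsd hB hP.1) hP.2.2

/-- Aufbau principle: if `P⋆` is a global minimizer of `J` over `Gr(m,ℝ^M)`,
then there exist an orthonormal family `(x₁,…,x_M)` of `ℝ^M` and reals `λ₁ ≤ ⋯ ≤ λ_M`
with `P⋆ = Σ_{k ≤ m} x_k x_kᵀ` and `G(P⋆) x_k = λ_k x_k` for all `k`. -/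
theorem stmt_2 {M m : ℕ} (hM : 2 ≤ M) (hm1 : 1 ≤ m) (hm2 : m ≤ M - 1)
    (A B : Matrix (Fin M) (Fin M) ℝ) (hA : A.IsSymm) (hApsd : A.PosSemidef)
    (hB : B.IsSymm) (Pstar : Matrix (Fin M) (Fin M) ℝ) (hP : Gr M m Pstar)
    (hmin : ∀ P : Matrix (Fin M) (Fin M) ℝ, Gr M m P → Jfun A B Pstar ≤ Jfun A B P) :
    ∃ x : Fin M → (Fin M → ℝ), ∃ lam : Fin M → ℝ,
      (∀ k l : Fin M, x k ⬝ᵥ x l = if k = l then (1 : ℝ) else 0) ∧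
      Monotone lam ∧
      Pstar = ∑ k ∈ Finset.univ.filter (fun k : Fin M => (k : ℕ) < m),
        vecMulVec (x k) (x k) ∧
      ∀ k : Fin M, (Gmap A B Pstar).mulVec (x k) = lam k • x k :=
  stmt_2_general A B hApsd hB Pstar hP hmin
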